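/- Let n ≥ 1 and M0, K0 > 0. Let L : ℝⁿ × ℝⁿ × ℝⁿ → ℝ be continuous, ℤⁿ-periodic in its second argument, convex in its third argument, and satisfy |v|²/2 − K0 ≤ L(x,y,v) ≤ |v|²/2 + K0 for all x, y, v ∈ ℝⁿ. For c, x, y ∈ ℝⁿ and t > 0 define m^c(t,x,y) := inf{ ∫₀ᵗ L(c, γ(s), γ̇(s)) ds : γ : [0,t] → ℝⁿ absolutely continuous, γ(0) = x, γ(t) = y }. Then there exists a constant C > 0 depending only on n, M0, K0 such that for every c ∈ ℝⁿ, every t > 0, and every y ∈ ℝⁿ with |y| ≤ M0 t, one has m^c(2t, 0, 2y) ≤ 2 m^c(t, 0, y) + C. -/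

import Mathlib

/-!
For `t ≤ 1` the straight segment and the lower bound `L ≥ -K0` suffice. For `t ≥ 1` take a
nearly minimizing curve `γ` from `0` to `y`. Since `‖v‖ ≤ L + K0 + 1/2`, its length is `O(t)`,
so some unit window `[τ, τ + 1]` has displacement `O(1)`. The competitor on `[0, 2t]` follows `γ`,
moves in time `1/4` to the lattice point `k` nearest to `y`, follows the translate `γ + k` (which
has the same action by periodicity) except that it crosses the window along a segment in time
`1/2`, and moves in time `1/4` to `2y`. The three segments cost `O(n + K0)` plus the squared
window displacement, and the skipped window had action at least `-K0`.
-/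

open MeasureTheory Real Set

noncomputable section

abbrev E (n : ℕ) : Type := EuclideanSpace ℝ (Fin n)

def intVec (n : ℕ) (k : Fin n → ℤ) : E n := WithLp.toLp 2 (fun i => (k i : ℝ))

def IsAC {n : ℕ} (a b : ℝ) (γ γ' : ℝ → E n) : Prop :=
  IntegrableOn γ' (Icc a b) volume ∧
    ∀ c d : ℝ, a ≤ c → c ≤ d → d ≤ b → γ d - γ c = ∫ s in c..d, γ' s

def mC {n : ℕ} (L : E n → E n → E n → ℝ) (c : E n) (t : ℝ) (x y : E n) : ℝ :=
  sInf { r | ∃ γ γ' : ℝ → E n, IsAC 0 t γ γ' ∧ γ 0 = x ∧ γ t = y ∧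
    IntervalIntegrable (fun s => L c (γ s) (γ' s)) volume 0 t ∧
    r = ∫ s in (0:ℝ)..t, L c (γ s) (γ' s) }

theorem IntervalIntegrable.mono_Icc {X : Type*} [NormedAddCommGroup X] {f : ℝ → X}
    {μ : Measure ℝ} {a b u v : ℝ} (hf : IntervalIntegrable f μ a b) (hu : a ≤ u) (huv : u ≤ v)
    (hv : v ≤ b) : IntervalIntegrable f μ u v :=
  hf.mono_set <|
    uIcc_subset_uIcc (mem_uIcc_of_le hu (huv.trans hv)) (mem_uIcc_of_le (hu.trans huv) hv)

def glue {X : Type*} (b : ℝ) (F G : ℝ → X) : ℝ → X := fun s => if s ≤ b then F s else G s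

section Glue

variable {X : Type*} {a b c : ℝ} {F G : ℝ → X}

theorem glue_of_le (h : c ≤ b) : glue b F G c = F c := if_pos h

theorem glue_of_lt (h : b < c) : glue b F G c = G c := if_neg h.not_ge

variable [NormedAddCommGroup X]

theorem integrableOn_glue (hF : IntegrableOn F (Icc a b))
    (hG : IntegrableOn G (Icc b c)) : IntegrableOn (glue b F G) (Icc a c) := by
  have hF' : IntegrableOn (glue b F G) (Icc a b) :=
    hF.congr_fun (fun s hs => (glue_of_le hs.2).symm) measurableSet_Icc
  have hG' : IntegrableOn (glue b F G) (Ioc b c) :=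
    (hG.mono_set Ioc_subset_Icc_self).congr_fun (fun s hs => (glue_of_lt hs.1).symm)
      measurableSet_Ioc
  refine (hF'.union hG').mono_set fun s hs => ?_
  rcases le_or_gt s b with h | h
  · exact Or.inl ⟨hs.1, h⟩
  · exact Or.inr ⟨h, hs.2⟩

variable [NormedSpace ℝ X]

theorem integral_glue (hab : a ≤ b) (hbc : b ≤ c) (hF : IntegrableOn F (Icc a b))
    (hG : IntegrableOn G (Icc b c)) :
    ∫ s in a..c, glue b F G s = (∫ s in a..b, F s) + ∫ s in b..c, G s := by
  have hI : IntervalIntegrable (glue b F G) volume a c :=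
    (intervalIntegrable_iff_integrableOn_Icc_of_le (hab.trans hbc)).2 (integrableOn_glue hF hG)
  rw [← intervalIntegral.integral_add_adjacent_intervals (hI.mono_Icc le_rfl hab hbc)
    (hI.mono_Icc hab hbc le_rfl)]
  congr 1
  · refine intervalIntegral.integral_congr fun s hs => ?_
    rw [uIcc_of_le hab] at hs
    exact glue_of_le hs.2
  · refine intervalIntegral.integral_congr_ae (Filter.Eventually.of_forall fun s hs => ?_)
    rw [uIoc_of_le hbc] at hs
    exact glue_of_lt hs.1

end Glue

namespace IsAC

variable {n : ℕ} {a b c d : ℝ} {γ γ' : ℝ → E n}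

theorem mono (h : IsAC a b γ γ') (hac : a ≤ c) (hdb : d ≤ b) : IsAC c d γ γ' :=
  ⟨h.1.mono_set (Icc_subset_Icc hac hdb),
    fun u v hu huv hv => h.2 u v (hac.trans hu) huv (hv.trans hdb)⟩

theorem of_sub_left (hint : IntegrableOn γ' (Icc a b))
    (h : ∀ v, a ≤ v → v ≤ b → γ v - γ a = ∫ s in a..v, γ' s) : IsAC a b γ γ' := by
  refine ⟨hint, fun u v hu huv hv => ?_⟩
  have hI := (intervalIntegrable_iff_integrableOn_Icc_of_le (hu.trans (huv.trans hv))).2 hint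
  rw [← intervalIntegral.integral_interval_sub_left (hI.mono_Icc le_rfl (hu.trans huv) hv)
    (hI.mono_Icc le_rfl hu (huv.trans hv)), ← h v (hu.trans huv) hv, ← h u hu (huv.trans hv),
    sub_sub_sub_cancel_right]

theorem line (a b : ℝ) (x v : E n) : IsAC a b (fun s => x + s • v) (fun _ => v) :=
  ⟨integrableOn_const measure_Icc_lt_top.ne, fun u w _ _ _ => by
    rw [intervalIntegral.integral_const, add_sub_add_left_eq_sub, ← sub_smul]⟩

theorem add_const (h : IsAC a b γ γ') (k : E n) : IsAC a b (fun s => γ s + k) γ' :=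
  ⟨h.1, fun u v hu huv hv => by rw [add_sub_add_right_eq_sub]; exact h.2 u v hu huv hv⟩

theorem comp_sub (h : IsAC a b γ γ') (hab : a ≤ b) (d : ℝ) :
    IsAC (a + d) (b + d) (fun s => γ (s - d)) (fun s => γ' (s - d)) := by
  refine ⟨?_, fun u v hu huv hv => ?_⟩
  · rw [← intervalIntegrable_iff_integrableOn_Icc_of_le (by linarith)]
    exact ((intervalIntegrable_iff_integrableOn_Icc_of_le hab).2 h.1).comp_sub_right d
  · rw [intervalIntegral.integral_comp_sub_right (fun s => γ' s) d]
    exact h.2 (u - d) (v - d) (by linarith) (by linarith) (by linarith)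

theorem glue {f f' g g' : ℝ → E n} (hab : a ≤ b) (hf : IsAC a b f f')
    (hg : IsAC b c g g') (hfg : f b = g b) : IsAC a c (glue b f g) (glue b f' g') := by
  refine of_sub_left (integrableOn_glue hf.1 hg.1) fun v hav hvc => ?_
  rw [glue_of_le hab]
  rcases le_or_gt v b with hvb | hbv
  · rw [glue_of_le hvb, hf.2 a v le_rfl hav hvb]
    refine intervalIntegral.integral_congr fun s hs => ?_
    rw [uIcc_of_le hav] at hs
    exact (glue_of_le (hs.2.trans hvb)).symm
  · rw [glue_of_lt hbv, integral_glue hab hbv.le hf.1 (hg.1.mono_set (Icc_subset_Icc_right hvc)),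
      ← hf.2 a b le_rfl hab le_rfl, ← hg.2 b v le_rfl hbv.le hvc, hfg]
    abel

end IsAC

section Action

variable {n : ℕ} {L : E n → E n → E n → ℝ} {c : E n} {K0 T : ℝ} {x y : E n} {r : ℝ}

/-- `mC L c T x y` is by definition `sInf (actionSet L c T x y)`. -/
def actionSet (L : E n → E n → E n → ℝ) (c : E n) (T : ℝ) (x y : E n) : Set ℝ :=
  { r | ∃ γ γ' : ℝ → E n, IsAC 0 T γ γ' ∧ γ 0 = x ∧ γ T = y ∧
    IntervalIntegrable (fun s => L c (γ s) (γ' s)) volume 0 T ∧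
    r = ∫ s in (0:ℝ)..T, L c (γ s) (γ' s) }

theorem add_mem_actionSet {T₁ T₂ r₁ r₂ : ℝ} {z : E n} (hT₁ : 0 ≤ T₁) (hT₂ : 0 ≤ T₂)
    (h₁ : r₁ ∈ actionSet L c T₁ x y) (h₂ : r₂ ∈ actionSet L c T₂ y z) :
    r₁ + r₂ ∈ actionSet L c (T₁ + T₂) x z := by
  obtain ⟨γ₁, γ₁', hγ₁, hγ₁0, hγ₁T, hL₁, rfl⟩ := h₁
  obtain ⟨γ₂, γ₂', hγ₂, hγ₂0, hγ₂T, hL₂, rfl⟩ := h₂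
  have hγ₂' := hγ₂.comp_sub hT₂ T₁
  have hL₂' := hL₂.comp_sub_right T₁
  rw [zero_add, add_comm T₂] at hγ₂' hL₂'
  have hT : T₁ ≤ T₁ + T₂ := le_add_of_nonneg_right hT₂
  have hint₁ := (intervalIntegrable_iff_integrableOn_Icc_of_le hT₁).1 hL₁
  have hint₂ := (intervalIntegrable_iff_integrableOn_Icc_of_le hT).1 hL₂'
  have hcost : (fun s => L c (glue T₁ γ₁ (fun s => γ₂ (s - T₁)) s)
      (glue T₁ γ₁' (fun s => γ₂' (s - T₁)) s)) =
      glue T₁ (fun s => L c (γ₁ s) (γ₁' s)) (fun s => L c (γ₂ (s - T₁)) (γ₂' (s - T₁))) := by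
    funext s
    unfold glue
    split_ifs <;> rfl
  refine ⟨_, _, hγ₁.glue hT₁ hγ₂' (by simp [hγ₁T, hγ₂0]), by rw [glue_of_le hT₁, hγ₁0], ?_, ?_, ?_⟩
  · rcases hT₂.eq_or_lt with rfl | hpos
    · rw [add_zero, glue_of_le le_rfl, hγ₁T, ← hγ₂0, hγ₂T]
    · rw [glue_of_lt (lt_add_of_pos_right T₁ hpos), add_sub_cancel_left, hγ₂T]
  · rw [hcost, intervalIntegrable_iff_integrableOn_Icc_of_le (hT₁.trans hT)]
    exact integrableOn_glue hint₁ hint₂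
  · rw [hcost, integral_glue hT₁ hT hint₁ hint₂,
      intervalIntegral.integral_comp_sub_right (fun s => L c (γ₂ s) (γ₂' s)), sub_self,
      add_sub_cancel_left]

theorem mem_actionSet_add_intVec
    (hper : ∀ (x y v : E n) (k : Fin n → ℤ), L x (y + intVec n k) v = L x y v)
    (k : Fin n → ℤ) (hr : r ∈ actionSet L c T x y) :
    r ∈ actionSet L c T (x + intVec n k) (y + intVec n k) := by
  obtain ⟨γ, γ', hγ, hγ0, hγT, hL, rfl⟩ := hr
  refine ⟨fun s => γ s + intVec n k, γ', hγ.add_const _, congrArg (· + _) hγ0,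
    congrArg (· + _) hγT, by simpa only [hper] using hL, by simp only [hper]⟩

theorem integral_mem_actionSet {γ γ' : ℝ → E n} {a b : ℝ} (hγ : IsAC 0 T γ γ')
    (hL : IntervalIntegrable (fun s => L c (γ s) (γ' s)) volume 0 T)
    (ha : 0 ≤ a) (hab : a ≤ b) (hb : b ≤ T) :
    ∫ s in a..b, L c (γ s) (γ' s) ∈ actionSet L c (b - a) (γ a) (γ b) := by
  have hγ' := (hγ.mono ha hb).comp_sub hab (-a)
  simp only [add_neg_cancel, ← sub_eq_add_neg, sub_neg_eq_add] at hγ'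
  refine ⟨_, _, hγ', by rw [zero_add], by rw [sub_add_cancel], ?_, ?_⟩
  · simpa using (hL.mono_Icc ha hab hb).comp_add_right a
  · rw [intervalIntegral.integral_comp_add_right (fun s => L c (γ s) (γ' s)), zero_add,
      sub_add_cancel]

theorem neg_mul_le_of_mem_actionSet (hlower : ∀ x y v, ‖v‖ ^ 2 / 2 - K0 ≤ L x y v) (hT : 0 ≤ T)
    (hr : r ∈ actionSet L c T x y) : -K0 * T ≤ r := by
  obtain ⟨γ, γ', -, -, -, hL, rfl⟩ := hr
  have := intervalIntegral.integral_mono_on hT (intervalIntegrable_const (c := -K0)) hL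
    fun s _ => by linarith [hlower c (γ s) (γ' s), sq_nonneg ‖γ' s‖]
  rwa [intervalIntegral.integral_const, smul_eq_mul, sub_zero, mul_comm] at this

theorem mC_le_of_mem_actionSet (hlower : ∀ x y v, ‖v‖ ^ 2 / 2 - K0 ≤ L x y v) (hT : 0 ≤ T)
    (hr : r ∈ actionSet L c T x y) : mC L c T x y ≤ r :=
  csInf_le ⟨-K0 * T, fun _ hr' => neg_mul_le_of_mem_actionSet hlower hT hr'⟩ hr

theorem exists_mem_actionSet_le (hcont : Continuous (fun q : E n × E n × E n => L q.1 q.2.1 q.2.2))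
    (hupper : ∀ x y v, L x y v ≤ ‖v‖ ^ 2 / 2 + K0) (hT : 0 < T) (x y : E n) :
    ∃ r ∈ actionSet L c T x y, r ≤ ‖y - x‖ ^ 2 / (2 * T) + K0 * T := by
  set v := T⁻¹ • (y - x)
  have hL : Continuous fun s : ℝ => L c (x + s • v) v :=
    hcont.comp (f := fun s : ℝ => (c, x + s • v, v)) (by fun_prop)
  refine ⟨_, ⟨_, _, IsAC.line 0 T x v, by simp, ?_, hL.intervalIntegrable 0 T, rfl⟩, ?_⟩
  · simp [v, smul_smul, hT.ne']
  calc ∫ s in (0:ℝ)..T, L c (x + s • v) v ≤ ∫ s in (0:ℝ)..T, (‖v‖ ^ 2 / 2 + K0) :=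
        intervalIntegral.integral_mono_on hT.le (hL.intervalIntegrable 0 T) intervalIntegrable_const
          fun s _ => hupper _ _ _
    _ = ‖y - x‖ ^ 2 / (2 * T) + K0 * T := by
        rw [intervalIntegral.integral_const, smul_eq_mul, sub_zero, norm_smul, norm_inv,
          Real.norm_of_nonneg hT.le]
        field_simp

theorem mC_le (hcont : Continuous (fun q : E n × E n × E n => L q.1 q.2.1 q.2.2))
    (hlower : ∀ x y v, ‖v‖ ^ 2 / 2 - K0 ≤ L x y v) (hupper : ∀ x y v, L x y v ≤ ‖v‖ ^ 2 / 2 + K0)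
    (hT : 0 < T) (x y : E n) : mC L c T x y ≤ ‖y - x‖ ^ 2 / (2 * T) + K0 * T := by
  obtain ⟨r, hr, hle⟩ := exists_mem_actionSet_le (c := c) hcont hupper hT x y
  exact (mC_le_of_mem_actionSet hlower hT.le hr).trans hle

theorem neg_mul_le_mC (hcont : Continuous (fun q : E n × E n × E n => L q.1 q.2.1 q.2.2))
    (hlower : ∀ x y v, ‖v‖ ^ 2 / 2 - K0 ≤ L x y v) (hupper : ∀ x y v, L x y v ≤ ‖v‖ ^ 2 / 2 + K0)
    (hT : 0 < T) (x y : E n) : -K0 * T ≤ mC L c T x y := by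
  obtain ⟨r, hr, -⟩ := exists_mem_actionSet_le (c := c) hcont hupper hT x y
  exact le_csInf ⟨r, hr⟩ fun _ hr' => neg_mul_le_of_mem_actionSet hlower hT.le hr'

end Action

theorem exists_integral_unit_interval_le {q : ℝ → ℝ} {t C : ℝ} (ht : 1 ≤ t)
    (hq : IntervalIntegrable q volume 0 t) (hq0 : ∀ s, 0 ≤ q s) (hC : ∫ s in 0..t, q s ≤ C * t) :
    ∃ τ, 0 ≤ τ ∧ τ + 1 ≤ t ∧ ∫ s in τ..τ + 1, q s ≤ 2 * C := by
  set N := ⌊t⌋₊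
  have hN : 1 ≤ N := Nat.le_floor (by exact_mod_cast ht)
  have hNt : (N : ℝ) ≤ t := Nat.floor_le (by linarith)
  have htN : t ≤ 2 * N := by
    have : (1 : ℝ) ≤ N := by exact_mod_cast hN
    linarith [Nat.lt_floor_add_one t]
  have hC0 : 0 ≤ C := by
    have : 0 ≤ ∫ s in 0..t, q s := intervalIntegral.integral_nonneg (by linarith) fun s _ => hq0 s
    nlinarith
  have hsum : ∑ k ∈ Finset.range N, ∫ s in (k : ℝ)..((k + 1 : ℕ) : ℝ), q s
      ≤ ∑ _k ∈ Finset.range N, 2 * C := by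
    rw [intervalIntegral.sum_integral_adjacent_intervals fun k hk => hq.mono_Icc (by positivity)
      (by push_cast; linarith) (le_trans (by exact_mod_cast hk) hNt), Finset.sum_const,
      Finset.card_range, nsmul_eq_mul, Nat.cast_zero]
    calc ∫ s in (0 : ℝ)..N, q s ≤ ∫ s in (0 : ℝ)..t, q s :=
          intervalIntegral.integral_mono_interval le_rfl (by positivity) hNt
            (Filter.Eventually.of_forall fun s => hq0 s) hq
      _ ≤ N * (2 * C) := by nlinarith
  obtain ⟨k, hk, hle⟩ := Finset.exists_le_of_sum_le (Finset.nonempty_range_iff.2 (by omega)) hsum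
  refine ⟨k, by positivity, ?_, by simpa using hle⟩
  exact le_trans (by exact_mod_cast Finset.mem_range.1 hk) hNt

theorem norm_intVec_round_sub_sq_le {n : ℕ} (y : E n) :
    ‖intVec n (fun i => round (y i)) - y‖ ^ 2 ≤ n / 4 := by
  rw [EuclideanSpace.norm_sq_eq]
  calc ∑ i, ‖(intVec n (fun i => round (y i)) - y) i‖ ^ 2 ≤ ∑ _i : Fin n, (1 / 4 : ℝ) := by
        refine Finset.sum_le_sum fun i _ => ?_
        have h := abs_sub_round (y i)
        simp only [intVec, PiLp.sub_apply, Real.norm_eq_abs, sq_abs]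
        rw [abs_sub_comm] at h
        nlinarith [abs_nonneg (round (y i) - y i), sq_abs (round (y i) - y i)]
    _ = n / 4 := by simp [div_eq_mul_inv]

theorem integral_norm_deriv_le {n : ℕ} {L : E n → E n → E n → ℝ} {c : E n} {K0 T : ℝ}
    {γ γ' : ℝ → E n} (hlower : ∀ x y v, ‖v‖ ^ 2 / 2 - K0 ≤ L x y v) (hT : 0 ≤ T)
    (hγ : IsAC 0 T γ γ') (hL : IntervalIntegrable (fun s => L c (γ s) (γ' s)) volume 0 T) :
    ∫ s in 0..T, ‖γ' s‖ ≤ (∫ s in 0..T, L c (γ s) (γ' s)) + (K0 + 1 / 2) * T := by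
  have hint : IntervalIntegrable (fun s => ‖γ' s‖) volume 0 T :=
    ((intervalIntegrable_iff_integrableOn_Icc_of_le hT).2 hγ.1).norm
  calc ∫ s in 0..T, ‖γ' s‖ ≤ ∫ s in 0..T, (L c (γ s) (γ' s) + (K0 + 1 / 2)) :=
        intervalIntegral.integral_mono_on hT hint (hL.add intervalIntegrable_const) fun s _ => by
          nlinarith [hlower c (γ s) (γ' s), sq_nonneg (‖γ' s‖ - 1)]
    _ = _ := by
        rw [intervalIntegral.integral_add hL intervalIntegrable_const,
          intervalIntegral.integral_const, smul_eq_mul, sub_zero, mul_comm]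

section Doubling

variable {n : ℕ} {L : E n → E n → E n → ℝ} {c : E n} {K0 M0 t : ℝ} {y : E n}
  (hcont : Continuous (fun q : E n × E n × E n => L q.1 q.2.1 q.2.2))
  (hlower : ∀ x y v, ‖v‖ ^ 2 / 2 - K0 ≤ L x y v) (hupper : ∀ x y v, L x y v ≤ ‖v‖ ^ 2 / 2 + K0)
include hcont hlower hupper

theorem mC_two_mul_le_add_mul (ht : 0 < t) (hy : ‖y‖ ≤ M0 * t) :
    mC L c (2 * t) 0 ((2:ℝ) • y) ≤ 2 * mC L c t 0 y + (M0 ^ 2 + 4 * K0) * t := by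
  have h2t := mC_le (c := c) hcont hlower hupper (by positivity : 0 < 2 * t) 0 ((2:ℝ) • y)
  have hlow := neg_mul_le_mC (c := c) hcont hlower hupper ht 0 y
  have hy2 : ‖y‖ ^ 2 ≤ M0 ^ 2 * t ^ 2 := by nlinarith [norm_nonneg y]
  have hnorm : ‖(2:ℝ) • y - 0‖ ^ 2 / (2 * (2 * t)) ≤ M0 ^ 2 * t := by
    rw [sub_zero, norm_smul, Real.norm_two, div_le_iff₀ (by positivity)]
    nlinarith
  nlinarith

theorem mC_two_mul_le_of_window
    (hper : ∀ (x y v : E n) (k : Fin n → ℤ), L x (y + intVec n k) v = L x y v)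
    {γ γ' : ℝ → E n} (hγ : IsAC 0 t γ γ') (hγ0 : γ 0 = 0) (hγt : γ t = y)
    (hL : IntervalIntegrable (fun s => L c (γ s) (γ' s)) volume 0 t)
    {τ : ℝ} (hτ : 0 ≤ τ) (hτt : τ + 1 ≤ t) :
    mC L c (2 * t) 0 ((2:ℝ) • y) ≤
      2 * (∫ s in 0..t, L c (γ s) (γ' s)) + ‖γ (τ + 1) - γ τ‖ ^ 2 + n + 2 * K0 := by
  set k := fun i => round (y i)
  have hk : ‖intVec n k - y‖ ^ 2 ≤ n / 4 := norm_intVec_round_sub_sq_le y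
  have hA₁ := mem_actionSet_add_intVec hper k (integral_mem_actionSet hγ hL le_rfl hτ (by linarith))
  have hW := integral_mem_actionSet hγ hL hτ (by linarith) hτt
  have hA₃ := mem_actionSet_add_intVec hper k
    (integral_mem_actionSet hγ hL (by linarith) hτt le_rfl)
  rw [sub_zero, hγ0, zero_add] at hA₁
  rw [add_sub_cancel_left] at hW
  rw [hγt] at hA₃
  obtain ⟨s₁, hs₁, hs₁le⟩ :=
    exists_mem_actionSet_le (c := c) hcont hupper (by norm_num : (0:ℝ) < 1 / 4) y (intVec n k)
  obtain ⟨s₂, hs₂, hs₂le⟩ := exists_mem_actionSet_le (c := c) hcont hupper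
    (by norm_num : (0:ℝ) < 1 / 2) (γ τ + intVec n k) (γ (τ + 1) + intVec n k)
  obtain ⟨s₃, hs₃, hs₃le⟩ := exists_mem_actionSet_le (c := c) hcont hupper
    (by norm_num : (0:ℝ) < 1 / 4) (y + intVec n k) ((2:ℝ) • y)
  -- `γ`, jump to `k`, `γ + k` on `[0, τ]`, window segment, `γ + k` on `[τ + 1, t]`, jump to `2y`
  have hmem := add_mem_actionSet (by linarith) (by linarith) ⟨γ, γ', hγ, hγ0, hγt, hL, rfl⟩ <|
    add_mem_actionSet (by norm_num) (by linarith) hs₁ <|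
    add_mem_actionSet hτ (by linarith) hA₁ <|
    add_mem_actionSet (by norm_num) (by linarith) hs₂ <|
    add_mem_actionSet (by linarith) (by norm_num) hA₃ hs₃
  rw [show t + (1 / 4 + (τ + (1 / 2 + (t - (τ + 1) + 1 / 4)))) = 2 * t by ring] at hmem
  have hsplit : ∫ s in 0..t, L c (γ s) (γ' s) = (∫ s in 0..τ, L c (γ s) (γ' s)) +
      (∫ s in τ..τ + 1, L c (γ s) (γ' s)) + ∫ s in τ + 1..t, L c (γ s) (γ' s) := by
    rw [intervalIntegral.integral_add_adjacent_intervals (hL.mono_Icc le_rfl hτ (by linarith))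
        (hL.mono_Icc hτ (by linarith) hτt),
      intervalIntegral.integral_add_adjacent_intervals (hL.mono_Icc le_rfl (by linarith) hτt)
        (hL.mono_Icc (by linarith) hτt le_rfl)]
  have hWlow := neg_mul_le_of_mem_actionSet hlower zero_le_one hW
  have e₂ : γ (τ + 1) + intVec n k - (γ τ + intVec n k) = γ (τ + 1) - γ τ :=
    add_sub_add_right_eq_sub _ _ _
  have e₃ : ‖(2:ℝ) • y - (y + intVec n k)‖ = ‖intVec n k - y‖ := by
    rw [← norm_neg, two_smul]
    congr 1
    abel
  rw [e₂] at hs₂le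
  rw [e₃] at hs₃le
  norm_num at hs₁le hs₂le hs₃le
  refine (mC_le_of_mem_actionSet hlower (by linarith) hmem).trans ?_
  linarith

theorem mC_two_mul_le_of_one_le
    (hper : ∀ (x y v : E n) (k : Fin n → ℤ), L x (y + intVec n k) v = L x y v)
    (ht : 1 ≤ t) (hy : ‖y‖ ≤ M0 * t) :
    mC L c (2 * t) 0 ((2:ℝ) • y) ≤
      2 * mC L c t 0 y + (n + 2 * K0 + 2 + (M0 ^ 2 + 4 * K0 + 4) ^ 2) := by
  obtain ⟨_, ⟨γ, γ', hγ, hγ0, hγt, hL, rfl⟩, hA⟩ :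
      ∃ r ∈ actionSet L c t 0 y, r < mC L c t 0 y + 1 :=
    have ⟨r, hr, _⟩ := exists_mem_actionSet_le (c := c) hcont hupper (by linarith) 0 y
    exists_lt_of_csInf_lt ⟨r, hr⟩ (lt_add_one _)
  have hm := mC_le (c := c) hcont hlower hupper (by linarith : 0 < t) 0 y
  have hy2 : ‖y - 0‖ ^ 2 / (2 * t) ≤ M0 ^ 2 / 2 * t := by
    rw [sub_zero, div_le_iff₀ (by positivity)]
    nlinarith [norm_nonneg y]
  have hspeed : ∫ s in 0..t, ‖γ' s‖ ≤ (M0 ^ 2 / 2 + 2 * K0 + 2) * t := by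
    nlinarith [integral_norm_deriv_le hlower (by linarith) hγ hL]
  obtain ⟨τ, hτ, hτt, hwin⟩ := exists_integral_unit_interval_le ht
    (((intervalIntegrable_iff_integrableOn_Icc_of_le (by linarith)).2 hγ.1).norm)
    (fun s => norm_nonneg _) hspeed
  have hΔ : ‖γ (τ + 1) - γ τ‖ ≤ M0 ^ 2 + 4 * K0 + 4 := by
    rw [hγ.2 τ (τ + 1) hτ (by linarith) hτt]
    exact (intervalIntegral.norm_integral_le_integral_norm (by linarith)).trans (by linarith)
  have := mC_two_mul_le_of_window hcont hlower hupper hper hγ hγ0 hγt hL hτ hτt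
  nlinarith [pow_le_pow_left₀ (norm_nonneg _) hΔ 2]

end Doubling

theorem stmt_13_general (n : ℕ) (M0 K0 : ℝ)
    (L : E n → E n → E n → ℝ)
    (hcont : Continuous (fun q : E n × E n × E n => L q.1 q.2.1 q.2.2))
    (hper : ∀ (x y v : E n) (k : Fin n → ℤ), L x (y + intVec n k) v = L x y v)
    (hbd : ∀ x y v, ‖v‖ ^ 2 / 2 - K0 ≤ L x y v ∧ L x y v ≤ ‖v‖ ^ 2 / 2 + K0) :
    ∃ C : ℝ, 0 < C ∧
      ∀ (c : E n) (t : ℝ) (y : E n), 0 < t → ‖y‖ ≤ M0 * t →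
        mC L c (2 * t) 0 ((2:ℝ) • y) ≤ 2 * mC L c t 0 y + C := by
  have hlower x y v := (hbd x y v).1
  have hupper x y v := (hbd x y v).2
  have hK0 : 0 ≤ K0 := by linarith [hbd 0 0 0]
  refine ⟨n + M0 ^ 2 + 6 * K0 + 2 + (M0 ^ 2 + 4 * K0 + 4) ^ 2, by positivity,
    fun c t y ht hy => ?_⟩
  rcases le_total t 1 with ht1 | ht1
  · have := mC_two_mul_le_add_mul (c := c) hcont hlower hupper ht hy
    nlinarith [sq_nonneg M0]
  · have := mC_two_mul_le_of_one_le (c := c) hcont hlower hupper hper ht1 hy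
    nlinarith [sq_nonneg M0]

/-- Appendix Lemma: approximate doubling estimate
`m^c(2t, 0, 2y) ≤ 2 m^c(t, 0, y) + C` with `C = C(n, M0, K0)` uniform in the frozen
point `c`. -/
theorem stmt_13 (n : ℕ) (hn : 1 ≤ n) (M0 K0 : ℝ) (hM0 : 0 < M0) (hK0 : 0 < K0)
    (L : E n → E n → E n → ℝ)
    (hcont : Continuous (fun q : E n × E n × E n => L q.1 q.2.1 q.2.2))
    (hper : ∀ (x y v : E n) (k : Fin n → ℤ), L x (y + intVec n k) v = L x y v)
    (hconv : ∀ x y, ConvexOn ℝ univ (fun v => L x y v))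
    (hbd : ∀ x y v, ‖v‖ ^ 2 / 2 - K0 ≤ L x y v ∧ L x y v ≤ ‖v‖ ^ 2 / 2 + K0) :
    ∃ C : ℝ, 0 < C ∧
      ∀ (c : E n) (t : ℝ) (y : E n), 0 < t → ‖y‖ ≤ M0 * t →
        mC L c (2 * t) 0 ((2:ℝ) • y) ≤ 2 * mC L c t 0 y + C :=
  stmt_13_general n M0 K0 L hcont hper hbd
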